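/- arXiv:2605.01729 — 4 statements merged into one kernel-verified Lean document; each statement's English description precedes it below -/
import Mathlib

section
/- Let X be a finite set, R : X → ℝ with R(x) > 0 for all x, and R' : X → ℝ with R'(x) ≥ 0. Let Z* = ∑_{x∈X} R(x), let Λ = Z* / (Z* + ∑_{x∈X} R'(x)), and define P(x) = R(x)/Z* and π(x) = (R(x)+R'(x))/(Z* + ∑_{x} R'(x)). Then the total variation distance TV(P, π) satisfies TV(P, π) ≤ 1 − Λ. -/
/-!
Adding nonnegative weights `b` to positive weights `a` lowers every old probability `a x / A`
by at most `a x / A - a x / (A + B)` and raises it by at most `b x / (A + B)`. Summing these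
pointwise bounds gives `1 - Λ + B / (A + B) = 2 (1 - Λ)` with `Λ = A / (A + B)`.
-/

open Finset Real

lemma abs_div_sub_add_div_add_le {a b A B : ℝ} (ha : 0 ≤ a) (hb : 0 ≤ b) (hA : 0 < A)
    (hB : 0 ≤ B) :
    |a / A - (a + b) / (A + B)| ≤ a / A - a / (A + B) + b / (A + B) := by
  have hshrink : a / (A + B) ≤ a / A := div_le_div_of_nonneg_left ha hA (by linarith)
  have hb' : 0 ≤ b / (A + B) := by positivity
  rw [add_div, abs_le]
  constructor <;> linarith

lemma half_sum_abs_div_sum_sub_add_div_sum_le {ι : Type*} (s : Finset ι) {a b : ι → ℝ}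
    (ha : ∀ i ∈ s, 0 ≤ a i) (hb : ∀ i ∈ s, 0 ≤ b i) (hA : 0 < ∑ i ∈ s, a i) :
    (1 / 2) * ∑ i ∈ s, |a i / (∑ j ∈ s, a j) - (a i + b i) / ((∑ j ∈ s, a j) + ∑ j ∈ s, b j)|
      ≤ 1 - (∑ j ∈ s, a j) / ((∑ j ∈ s, a j) + ∑ j ∈ s, b j) := by
  set A := ∑ j ∈ s, a j
  set B := ∑ j ∈ s, b j
  have hB : 0 ≤ B := sum_nonneg hb
  have hsum : ∑ i ∈ s, |a i / A - (a i + b i) / (A + B)|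
      ≤ A / A - A / (A + B) + B / (A + B) :=
    calc ∑ i ∈ s, |a i / A - (a i + b i) / (A + B)|
        ≤ ∑ i ∈ s, (a i / A - a i / (A + B) + b i / (A + B)) :=
          sum_le_sum fun i hi => abs_div_sub_add_div_add_le (ha i hi) (hb i hi) hA hB
      _ = A / A - A / (A + B) + B / (A + B) := by
          simp only [sum_add_distrib, sum_sub_distrib, ← sum_div]
          rfl
  have hAB : 0 < A + B := by linarith
  have hval : A / A - A / (A + B) + B / (A + B) = 2 * (1 - A / (A + B)) := by
    field_simp
    ring
  linarith

theorem stmt_1 (X : Type*) [Fintype X] [Nonempty X] (R R' : X → ℝ)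
    (hR : ∀ x, 0 < R x) (hR' : ∀ x, 0 ≤ R' x) :
    (1/2) * ∑ x, |R x / (∑ y, R y) - (R x + R' x) / ((∑ y, R y) + ∑ y, R' y)|
      ≤ 1 - (∑ y, R y) / ((∑ y, R y) + ∑ y, R' y) :=
  half_sum_abs_div_sum_sub_add_div_sum_le univ (fun x _ => (hR x).le) (fun x _ => hR' x)
    (sum_pos (fun x _ => hR x) univ_nonempty)
end

section
/- Let X be a finite set, R : X → ℝ with R(x) > 0 for all x, and R' : X → ℝ with R'(x) ≥ 0, where R' is supported on a subset X_sub ⊆ X (i.e., R'(x) = 0 for x ∉ X_sub). Let Z* = ∑_{x∈X} R(x), Z*_sub = ∑_{x∈X_sub} R(x), Λ = Z*/(Z* + ∑_x R'(x)), and define P(x) = R(x)/Z* and π(x) = (R(x)+R'(x))/(Z* + ∑_x R'(x)). Then TV(P, π) ≥ ((Z* − Z*_sub)/Z*)·(1 − Λ). -/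
/-! Both `P` and `π` have total mass one, so the sum of `P - π` over any set `A` is at most
half the `ℓ¹` distance. Take `A = Xsubᶜ`: there `R' = 0`, so
`P - π = R (1/Z* - 1/(Z* + ∑ R'))`, whose sum over `A` is
`(Z* - Z*_sub) (1/Z* - 1/(Z* + ∑ R'))`, the claimed bound. -/

open Finset Real

namespace Finset

variable {ι : Type*}

theorem sum_le_half_sum_abs_of_sum_eq_zero [Fintype ι] (s : Finset ι) {f : ι → ℝ}
    (hf : ∑ x, f x = 0) : ∑ x ∈ s, f x ≤ (1 / 2) * ∑ x, |f x| := by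
  classical
  have hcompl : ∑ x ∈ sᶜ, f x = -∑ x ∈ s, f x := by linarith [sum_compl_add_sum s f]
  have hs : ∑ x ∈ s, f x ≤ ∑ x ∈ s, |f x| := sum_le_sum fun x _ => le_abs_self _
  have hsc : -∑ x ∈ sᶜ, f x ≤ ∑ x ∈ sᶜ, |f x| :=
    (neg_le_abs _).trans (abs_sum_le_sum_abs f sᶜ)
  linarith [sum_compl_add_sum s fun x => |f x|]

theorem sum_div_sum_sub_div_sum {K : Type*} [Field K] (s : Finset ι) (a b : ι → K)
    (ha : ∑ y ∈ s, a y ≠ 0) (hb : ∑ y ∈ s, b y ≠ 0) :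
    ∑ x ∈ s, (a x / ∑ y ∈ s, a y - b x / ∑ y ∈ s, b y) = 0 := by
  rw [sum_sub_distrib, ← sum_div, ← sum_div, div_self ha, div_self hb, sub_self]

end Finset

theorem stmt_2 (X : Type*) [Fintype X] [Nonempty X] (Xsub : Finset X) (R R' : X → ℝ)
    (hR : ∀ x, 0 < R x) (hR' : ∀ x, 0 ≤ R' x)
    (hsupp : ∀ x ∉ Xsub, R' x = 0) :
    (1/2) * ∑ x, |R x / (∑ y, R y) - (R x + R' x) / ((∑ y, R y) + ∑ y, R' y)|
      ≥ (((∑ y, R y) - ∑ y ∈ Xsub, R y) / (∑ y, R y))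
          * (1 - (∑ y, R y) / ((∑ y, R y) + ∑ y, R' y)) := by
  classical
  set Z := ∑ y, R y
  set T := ∑ y, R' y
  have hZ : 0 < Z := sum_pos (fun x _ => hR x) univ_nonempty
  have hZT : 0 < Z + T := add_pos_of_pos_of_nonneg hZ (sum_nonneg fun x _ => hR' x)
  have hmass : ∑ x, (R x / Z - (R x + R' x) / (Z + T)) = 0 := by
    have hZT' : ∑ y, (R y + R' y) ≠ 0 := by simpa only [sum_add_distrib] using hZT.ne'
    simpa only [sum_add_distrib] using
      sum_div_sum_sub_div_sum univ R (fun x => R x + R' x) hZ.ne' hZT'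
  have hcompl : ∑ x ∈ Xsubᶜ, (R x / Z - (R x + R' x) / (Z + T))
      = (Z - ∑ y ∈ Xsub, R y) * (1 / Z - 1 / (Z + T)) := by
    rw [← eq_sub_of_add_eq (sum_compl_add_sum Xsub R), sum_mul]
    refine sum_congr rfl fun x hx => ?_
    rw [hsupp x (mem_compl.mp hx)]
    ring
  calc ((Z - ∑ y ∈ Xsub, R y) / Z) * (1 - Z / (Z + T))
      = (Z - ∑ y ∈ Xsub, R y) * (1 / Z - 1 / (Z + T)) := by field_simp
    _ = ∑ x ∈ Xsubᶜ, (R x / Z - (R x + R' x) / (Z + T)) := hcompl.symm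
    _ ≤ _ := sum_le_half_sum_abs_of_sum_eq_zero _ hmass
end

section
/- Let T be a finite set, and let π̂ and P_F be probability distributions on T. Let G ⊆ T, and set ε = π̂(Gᶜ), η = P_F(Gᶜ). Suppose for all τ ∈ G and some K > 0 and c ≥ 0: exp(−c) ≤ K·P_F(τ)/π̂(τ) ≤ exp(c) (where π̂(τ) > 0 on G). Then K ≥ exp(−c)·(1 − ε), and consequently P_F(τ)/π̂(τ) ≤ exp(2c)/(1 − ε) for all τ ∈ G (assuming ε < 1). -/
open Finset Real

theorem stmt_6 (T : Type*) [Fintype T] [DecidableEq T] (piHat PF : T → ℝ)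
    (hpi0 : ∀ τ, 0 ≤ piHat τ) (hpi1 : ∑ τ, piHat τ = 1)
    (hPF0 : ∀ τ, 0 ≤ PF τ) (hPF1 : ∑ τ, PF τ = 1)
    (G : Finset T) (hpiG : ∀ τ ∈ G, 0 < piHat τ)
    (K c : ℝ) (hK : 0 < K) (hc : 0 ≤ c)
    (hratio : ∀ τ ∈ G, Real.exp (-c) ≤ K * PF τ / piHat τ ∧ K * PF τ / piHat τ ≤ Real.exp c) :
    K ≥ Real.exp (-c) * (1 - ∑ τ ∈ Gᶜ, piHat τ) ∧
    ((∑ τ ∈ Gᶜ, piHat τ) < 1 →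
      ∀ τ ∈ G, PF τ / piHat τ ≤ Real.exp (2 * c) / (1 - ∑ τ' ∈ Gᶜ, piHat τ')) := by
  have hsplit : ∑ τ ∈ G, piHat τ = 1 - ∑ τ ∈ Gᶜ, piHat τ := by
    have := Finset.sum_add_sum_compl G piHat
    rw [hpi1] at this; linarith
  have hterm : ∀ τ ∈ G, Real.exp (-c) * piHat τ ≤ K * PF τ := by
    intro τ hτ
    have h := (hratio τ hτ).1
    have hp := hpiG τ hτ
    rw [le_div_iff₀ hp] at h
    linarith
  have hKlb : K ≥ Real.exp (-c) * (1 - ∑ τ ∈ Gᶜ, piHat τ) := by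
    have h1 : ∑ τ ∈ G, Real.exp (-c) * piHat τ ≤ ∑ τ ∈ G, K * PF τ :=
      Finset.sum_le_sum hterm
    have h2 : ∑ τ ∈ G, K * PF τ ≤ K * 1 := by
      rw [← Finset.mul_sum]
      have : ∑ τ ∈ G, PF τ ≤ ∑ τ, PF τ :=
        Finset.sum_le_sum_of_subset_of_nonneg (Finset.subset_univ G)
          (fun i _ _ => hPF0 i)
      rw [hPF1] at this
      exact mul_le_mul_of_nonneg_left this hK.le
    rw [← Finset.mul_sum, hsplit] at h1
    linarith
  refine ⟨hKlb, fun hε τ hτ => ?_⟩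
  have hp := hpiG τ hτ
  have h2 := (hratio τ hτ).2
  have hPFpi : PF τ / piHat τ ≤ Real.exp c / K := by
    rw [div_le_div_iff₀ hp hK]
    have : K * PF τ ≤ Real.exp c * piHat τ := by
      rw [div_le_iff₀ hp] at h2; linarith
    linarith
  have hpos : 0 < Real.exp (-c) * (1 - ∑ τ' ∈ Gᶜ, piHat τ') :=
    mul_pos (Real.exp_pos _) (by linarith)
  have h3 : Real.exp c / K ≤ Real.exp c / (Real.exp (-c) * (1 - ∑ τ' ∈ Gᶜ, piHat τ')) :=
    div_le_div_of_nonneg_left (Real.exp_pos c).le hpos hKlb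
  have h4 : Real.exp c / (Real.exp (-c) * (1 - ∑ τ' ∈ Gᶜ, piHat τ')) =
      Real.exp (2 * c) / (1 - ∑ τ' ∈ Gᶜ, piHat τ') := by
    rw [div_mul_eq_div_div, Real.exp_neg, div_inv_eq_mul, ← Real.exp_add]
    ring_nf
  linarith [h4 ▸ h3]
end

section
/- Let T be a finite set, π and P probability distributions on T, G ⊆ T with ε = π(Gᶜ) and η = P(Gᶜ). Suppose π(τ) > 0 on G and there are constants c ≥ 0 and M ≥ 0 with M < 1/(exp(c)−1) (c > 0), and a constant K > 0 such that for all τ ∈ G: exp(−c) ≤ (K·P(τ) + d(τ))/(π(τ) + d(τ)) ≤ exp(c) where d : G → ℝ_{≥0} satisfies d(τ) ≤ M·π(τ). Then K ≥ (1−ε)·(exp(−c) − (1−exp(−c))·M). -/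
open Finset Real

theorem stmt_16 (T : Type*) [Fintype T] [DecidableEq T] (piT P : T → ℝ)
    (hpi0 : ∀ τ, 0 ≤ piT τ) (hpi1 : ∑ τ, piT τ = 1)
    (hP0 : ∀ τ, 0 ≤ P τ) (hP1 : ∑ τ, P τ = 1)
    (G : Finset T) (hpiG : ∀ τ ∈ G, 0 < piT τ)
    (c M K : ℝ) (hc : 0 < c) (hM0 : 0 ≤ M) (hM : M < 1 / (Real.exp c - 1)) (hK : 0 < K)
    (d : T → ℝ) (hd0 : ∀ τ ∈ G, 0 ≤ d τ) (hdM : ∀ τ ∈ G, d τ ≤ M * piT τ)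
    (hratio : ∀ τ ∈ G,
      Real.exp (-c) ≤ (K * P τ + d τ) / (piT τ + d τ) ∧
      (K * P τ + d τ) / (piT τ + d τ) ≤ Real.exp c) :
    K ≥ (1 - ∑ τ ∈ Gᶜ, piT τ) * (Real.exp (-c) - (1 - Real.exp (-c)) * M) := by
  set A : ℝ := Real.exp (-c) - (1 - Real.exp (-c)) * M with hA
  have hec : 1 < Real.exp c := by
    rw [← Real.exp_zero]; exact Real.exp_lt_exp.mpr hc
  have hecpos : 0 < Real.exp c - 1 := by linarith
  have hemc : Real.exp (-c) = 1 / Real.exp c := by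
    rw [Real.exp_neg]; ring
  have hepos : 0 < Real.exp c := Real.exp_pos c
  have hApos : 0 < A := by
    have h1 : (1 - Real.exp (-c)) * M < (1 - Real.exp (-c)) * (1 / (Real.exp c - 1)) := by
      apply mul_lt_mul_of_pos_left hM
      rw [hemc]
      have : 1 / Real.exp c < 1 := by
        rw [div_lt_one hepos]; exact hec
      linarith
    have h2 : (1 - Real.exp (-c)) * (1 / (Real.exp c - 1)) = Real.exp (-c) := by
      rw [hemc]
      field_simp
    rw [hA]; linarith
  -- key pointwise bound
  have hkey : ∀ τ ∈ G, A * piT τ ≤ K * P τ := by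
    intro τ hτ
    have hπ := hpiG τ hτ
    have hd := hd0 τ hτ
    have hdM' := hdM τ hτ
    have hden : 0 < piT τ + d τ := by linarith
    have h1 := (hratio τ hτ).1
    have h2 : Real.exp (-c) * (piT τ + d τ) ≤ K * P τ + d τ := by
      have := (le_div_iff₀ hden).mp h1
      linarith
    have hem1 : Real.exp (-c) ≤ 1 := by
      rw [hemc, div_le_one hepos]; linarith
    nlinarith [mul_le_mul_of_nonneg_left hdM' (by linarith : (0:ℝ) ≤ 1 - Real.exp (-c))]
  -- sum over G
  have hsumG : A * ∑ τ ∈ G, piT τ ≤ K * ∑ τ ∈ G, P τ := by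
    rw [mul_sum, mul_sum]
    exact Finset.sum_le_sum hkey
  have hsplit : ∑ τ ∈ G, piT τ = 1 - ∑ τ ∈ Gᶜ, piT τ := by
    have := Finset.sum_add_sum_compl G piT
    rw [hpi1] at this; linarith
  have hPle : ∑ τ ∈ G, P τ ≤ 1 := by
    rw [← hP1]
    exact Finset.sum_le_sum_of_subset_of_nonneg (Finset.subset_univ G)
      (fun τ _ _ => hP0 τ)
  have : K * ∑ τ ∈ G, P τ ≤ K := by
    nlinarith
  rw [ge_iff_le, mul_comm]
  calc A * (1 - ∑ τ ∈ Gᶜ, piT τ) = A * ∑ τ ∈ G, piT τ := by rw [hsplit]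
    _ ≤ K * ∑ τ ∈ G, P τ := hsumG
    _ ≤ K := this
end
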